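/- arXiv:math/0404058 — 2 statements merged into one kernel-verified Lean document; each statement's English description precedes it below -/
import Mathlib

section
/- For finite multisets M, N of natural numbers, M is smaller than N in the Dershowitz–Manna order if and only if the non-increasing sorted list of M precedes the non-increasing sorted list of N lexicographically (with a proper prefix counting as smaller). In other words, on finite multisets over a linearly ordered set like ℕ, the Dershowitz–Manna order coincides with sorted-descending lexicographic comparison. -/
/-- The elements of a finite multiset of naturals listed in non-increasing order. -/
def sortDesc (m : Multiset ℕ) : List ℕ := (Multiset.sort m (· ≤ ·)).reverse

/-- The complexity order on finite multisets of naturals: compare the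
non-increasing sorted lists lexicographically, a proper prefix being smaller. -/
def MLT (m m' : Multiset ℕ) : Prop := List.Lex (· < ·) (sortDesc m) (sortDesc m')

/-- The Dershowitz–Manna order on finite multisets of naturals. -/
def DMLT (M N : Multiset ℕ) : Prop :=
  ∃ X Y : Multiset ℕ, X ≠ 0 ∧ X ≤ N ∧ M = N - X + Y ∧ ∀ y ∈ Y, ∃ x ∈ X, y < x

/-!
Both orders are the lexicographic order on multiplicity functions, with the elements of `ℕ`
read from the largest down: `M` is below `N` iff at the largest `k` where the multiplicities
differ, `k` occurs fewer times in `M` than in `N`.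

For the Dershowitz–Manna order, the largest element of `X` is such a `k`; conversely
`X = N - M`, `Y = M - N` is a witness. For the sorted lists, cutting both at `k` leaves a
common block of elements above `k`, then a run of `k`s that is longer in `N`. The converse
for the sorted lists follows because the multiplicity order is total on `M ≠ N` and the
lexicographic order is asymmetric.
-/

open Multiset

def CountLexLT (M N : Multiset ℕ) : Prop :=
  ∃ k, (∀ j, k < j → count j M = count j N) ∧ count k M < count k N

lemma countLexLT_or_countLexLT_of_ne {M N : Multiset ℕ} (h : M ≠ N) :
    CountLexLT M N ∨ CountLexLT N M := by
  set S := (M + N).toFinset.filter fun j => count j M ≠ count j N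
  have mem_S : ∀ j, j ∈ S ↔ count j M ≠ count j N := by
    intro j
    simp only [S, Finset.mem_filter, Multiset.mem_toFinset, and_iff_right_iff_imp]
    intro hj
    rw [mem_add, ← count_pos, ← count_pos]
    omega
  obtain ⟨j, hj⟩ : ∃ j, count j M ≠ count j N := by
    by_contra! h'
    exact h (Multiset.ext.mpr h')
  obtain ⟨k, hkS, hk_max⟩ := S.exists_max_image id ⟨j, (mem_S j).mpr hj⟩
  have h_above : ∀ j, k < j → count j M = count j N := fun j hkj ↦ by
    by_contra hne
    exact absurd (hk_max j ((mem_S j).mpr hne)) (not_le.mpr hkj)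
  rcases lt_or_gt_of_ne ((mem_S k).mp hkS) with hlt | hgt
  · exact .inl ⟨k, h_above, hlt⟩
  · exact .inr ⟨k, fun j hkj ↦ (h_above j hkj).symm, hgt⟩

lemma countLexLT_of_dmlt {M N : Multiset ℕ} (h : DMLT M N) : CountLexLT M N := by
  obtain ⟨X, Y, hX0, hXN, rfl, hY⟩ := h
  obtain ⟨a, haX, ha_max⟩ := X.exists_max_image id hX0
  have hY_lt : ∀ y ∈ Y, y < a := fun y hy ↦ by
    obtain ⟨x, hx, hyx⟩ := hY y hy
    exact hyx.trans_le (ha_max x hx)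
  have hY_a : count a Y = 0 := count_eq_zero.mpr fun ha ↦ (hY_lt a ha).false
  refine ⟨a, fun j haj ↦ ?_, ?_⟩
  · have hX_j : count j X = 0 := count_eq_zero.mpr fun hj ↦ (ha_max j hj).not_gt haj
    have hY_j : count j Y = 0 := count_eq_zero.mpr fun hj ↦ (hY_lt j hj).not_gt haj
    rw [count_add, count_sub, hX_j, hY_j]
    rfl
  · have hX_a := count_pos.mpr haX
    have := le_iff_count.mp hXN a
    rw [count_add, count_sub, hY_a]
    omega

lemma dmlt_of_countLexLT {M N : Multiset ℕ} (h : CountLexLT M N) : DMLT M N := by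
  obtain ⟨k, h_above, hk⟩ := h
  have hk_mem : k ∈ N - M := by
    rw [← count_pos, count_sub]
    omega
  refine ⟨N - M, M - N, ne_of_mem_of_not_mem' hk_mem (notMem_zero k),
    Multiset.sub_le_self N M, ?_, fun y hy ↦ ⟨k, hk_mem, ?_⟩⟩
  · ext j
    simp only [count_add, count_sub]
    omega
  · rw [← count_pos, count_sub] at hy
    by_contra! hky
    rcases hky.lt_or_eq with hky | rfl
    · have := h_above y hky
      omega
    · omega

lemma sortDesc_pairwise (m : Multiset ℕ) : (sortDesc m).Pairwise (· ≥ ·) := by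
  rw [sortDesc, List.pairwise_reverse]
  exact pairwise_sort m (· ≤ ·)

@[simp]
lemma coe_sortDesc (m : Multiset ℕ) : (sortDesc m : Multiset ℕ) = m := by
  rw [sortDesc, coe_reverse, sort_eq]

@[simp]
lemma mem_sortDesc {a : ℕ} {m : Multiset ℕ} : a ∈ sortDesc m ↔ a ∈ m := by
  rw [← mem_coe, coe_sortDesc]

lemma eq_sortDesc_of_pairwise {l : List ℕ} (hs : l.Pairwise (· ≥ ·)) :
    l = sortDesc l :=
  List.Perm.eq_of_pairwise' hs (sortDesc_pairwise l) (coe_eq_coe.mp (coe_sortDesc l).symm)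

lemma sortDesc_replicate (n k : ℕ) : sortDesc (replicate n k) = List.replicate n k :=
  (eq_sortDesc_of_pairwise (List.pairwise_replicate.mpr (.inr le_rfl))).symm

lemma sortDesc_add {A B : Multiset ℕ} (h : ∀ a ∈ A, ∀ b ∈ B, b ≤ a) :
    sortDesc (A + B) = sortDesc A ++ sortDesc B := by
  rw [eq_sortDesc_of_pairwise (l := sortDesc A ++ sortDesc B), ← coe_add, coe_sortDesc,
    coe_sortDesc]
  refine List.pairwise_append.mpr ⟨sortDesc_pairwise A, sortDesc_pairwise B, ?_⟩
  simpa only [mem_sortDesc] using h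

lemma sortDesc_eq_append_replicate_append (M : Multiset ℕ) (k : ℕ) :
    sortDesc M = sortDesc (M.filter (k < ·)) ++
      (List.replicate (count k M) k ++ sortDesc (M.filter (· < k))) := by
  have hM : M = M.filter (k < ·) + (replicate (count k M) k + M.filter (· < k)) := by
    ext j
    simp only [count_add, count_filter, count_replicate]
    rcases lt_trichotomy k j with h | rfl | h
    · simp [h, h.ne, h.not_gt]
    · simp
    · simp [h, h.ne', h.not_gt]
  have hlow : ∀ a ∈ replicate (count k M) k, ∀ b ∈ M.filter (· < k), b ≤ a := by
    intro a ha b hb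
    rw [eq_of_mem_replicate ha]
    exact (mem_filter.mp hb).2.le
  have hhigh : ∀ a ∈ M.filter (k < ·),
      ∀ b ∈ replicate (count k M) k + M.filter (· < k), b ≤ a := by
    intro a ha b hb
    have hka := (mem_filter.mp ha).2
    rcases mem_add.mp hb with hb | hb
    · exact (eq_of_mem_replicate hb).trans_le hka.le
    · exact ((mem_filter.mp hb).2.trans hka).le
  conv_lhs => rw [hM]
  rw [sortDesc_add hhigh, sortDesc_add hlow, sortDesc_replicate]

lemma List.Lex.lt_cons_of_forall_lt {l t : List ℕ} {k : ℕ} (h : ∀ a ∈ l, a < k) :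
    List.Lex (· < ·) l (k :: t) := by
  cases l with
  | nil => exact .nil
  | cons a _ => exact .rel (h a List.mem_cons_self)

lemma mlt_of_countLexLT {M N : Multiset ℕ} (h : CountLexLT M N) : MLT M N := by
  obtain ⟨k, h_above, hk⟩ := h
  have h_filter : M.filter (k < ·) = N.filter (k < ·) := by
    ext j
    simp only [count_filter]
    split_ifs with hkj
    exacts [h_above j hkj, rfl]
  have h_run : List.replicate (count k N) k =
      List.replicate (count k M) k ++ k :: List.replicate (count k N - count k M - 1) k := by
    rw [← List.replicate_succ, ← List.replicate_add]
    congr 1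
    omega
  rw [MLT, sortDesc_eq_append_replicate_append M k, sortDesc_eq_append_replicate_append N k,
    h_filter, h_run, List.append_assoc]
  refine .append_left _ (.append_left _ ?_ _) _
  exact .lt_cons_of_forall_lt fun a ha ↦ (mem_filter.mp (mem_sortDesc.mp ha)).2

lemma MLT.not_mlt {M N : Multiset ℕ} (h : MLT M N) : ¬ MLT N M :=
  (List.Lex.asymm (α := ℕ) (· < ·)).asymm _ _ h

theorem stmt_2 (M N : Multiset ℕ) : DMLT M N ↔ MLT M N := by
  refine ⟨fun h ↦ mlt_of_countLexLT (countLexLT_of_dmlt h), fun h ↦ ?_⟩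
  have hne : M ≠ N := by
    rintro rfl
    exact h.not_mlt h
  rcases countLexLT_or_countLexLT_of_ne hne with hMN | hNM
  · exact dmlt_of_countLexLT hMN
  · exact absurd (mlt_of_countLexLT hNM) h.not_mlt
end

section
/- Abstract criticality from infinite distance: Let D be a type with side : D → Bool and a symmetric relation disj, and reducing pairs as usual. Assume the closure property: for all reducing pairs p and all A, B, B' with (A, B) and (A, B') reducing pairs (A on either side), if the distance from p to (A, B') is finite then the distance from p to (A, B) is finite. Suppose (V_0, W_0) and (V_1, W_1) are reducing pairs whose distance is infinite. Then the set of all disks that belong to at least one reducing pair can be partitioned into two sets C_0 and C_1 such that: (1) V_0, W_0 ∈ C_0 and V_1, W_1 ∈ C_1 (so each C_i contains both disks of some reducing pair); and (2) no reducing pair (V, W) has V ∈ C_0 and W ∈ C_1, nor V ∈ C_1 and W ∈ C_0. -/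
variable {D : Type*}

/-- `(V, W)` is an (ordered) reducing pair: `V` lies above the surface,
`W` lies below, and they are disjoint. -/
def IsRP (side : D → Bool) (disj : D → D → Prop) (V W : D) : Prop :=
  side V = true ∧ side W = false ∧ disj V W

/-- The unordered pair `{p.1, p.2}` is a reducing pair. -/
def RPair (side : D → Bool) (disj : D → D → Prop) (p : D × D) : Prop :=
  IsRP side disj p.1 p.2 ∨ IsRP side disj p.2 p.1

/-- There is a chain `D_0, …, D_{n+1}` from the unordered pair `p` to the
unordered pair `q`: every unordered consecutive pair is a reducing pair and for
`1 ≤ j ≤ n` the disks `D_{j-1}` and `D_{j+1}` are equal or disjoint. -/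
def HasChain (side : D → Bool) (disj : D → D → Prop) (n : ℕ) (p q : D × D) : Prop :=
  ∃ f : ℕ → D,
    ((f 0, f 1) = p ∨ (f 1, f 0) = p) ∧
    ((f n, f (n + 1)) = q ∨ (f (n + 1), f n) = q) ∧
    (∀ j ≤ n, RPair side disj (f j, f (j + 1))) ∧
    (∀ j, 1 ≤ j → j ≤ n → f (j - 1) = f (j + 1) ∨ disj (f (j - 1)) (f (j + 1)))

/-- The distance between two reducing pairs: the least `n` admitting a chain,
and `∞` if there is no chain. -/
noncomputable def pairDist (side : D → Bool) (disj : D → D → Prop) (p q : D × D) : ℕ∞ :=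
  sInf {x : ℕ∞ | ∃ n : ℕ, x = (n : ℕ∞) ∧ HasChain side disj n p q}

lemma RPair.swap' {side : D → Bool} {disj : D → D → Prop} {A B : D}
    (h : RPair side disj (A, B)) : RPair side disj (B, A) := h.symm

lemma hasChain_swap {side : D → Bool} {disj : D → D → Prop} {n : ℕ} {p : D × D} {A B : D} :
    HasChain side disj n p (A, B) ↔ HasChain side disj n p (B, A) := by
  constructor <;>
  · rintro ⟨f, h1, h2, h3, h4⟩
    exact ⟨f, h1, by simpa [Prod.ext_iff, and_comm] using h2.symm, h3, h4⟩

lemma pairDist_swap {side : D → Bool} {disj : D → D → Prop} {p : D × D} (A B : D) :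
    pairDist side disj p (A, B) = pairDist side disj p (B, A) := by
  unfold pairDist
  congr 1
  ext x
  simp only [Set.mem_setOf_eq, hasChain_swap]

lemma pairDist_ne_top_of_chain {side : D → Bool} {disj : D → D → Prop} {p q : D × D}
    {n : ℕ} (h : HasChain side disj n p q) : pairDist side disj p q ≠ ⊤ := by
  have hm : ((n : ℕ∞)) ∈ {x : ℕ∞ | ∃ m : ℕ, x = (m : ℕ∞) ∧ HasChain side disj m p q} :=
    ⟨n, rfl, h⟩
  exact ((sInf_le hm).trans_lt (WithTop.coe_lt_top n)).ne

lemma pairDist_self_ne_top {side : D → Bool} {disj : D → D → Prop} {V W : D}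
    (h : RPair side disj (V, W)) : pairDist side disj (V, W) (V, W) ≠ ⊤ := by
  apply pairDist_ne_top_of_chain (n := 0)
  refine ⟨fun k => if k = 0 then V else W, Or.inl (by simp), Or.inl (by simp), ?_, ?_⟩
  · intro j hj; interval_cases j; simpa using h
  · intro j hj hj'; omega

theorem stmt_6 (side : D → Bool) (disj : D → D → Prop) (hdisj : Symmetric disj)
    (hclosure : ∀ (p : D × D) (A B B' : D), RPair side disj p →
      RPair side disj (A, B) → RPair side disj (A, B') →
      pairDist side disj p (A, B') ≠ ⊤ → pairDist side disj p (A, B) ≠ ⊤)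
    (V₀ W₀ V₁ W₁ : D)
    (h₀ : RPair side disj (V₀, W₀)) (h₁ : RPair side disj (V₁, W₁))
    (hinf : pairDist side disj (V₀, W₀) (V₁, W₁) = ⊤) :
    ∃ C₀ C₁ : Set D,
      C₀ ∪ C₁ = {A : D | ∃ B : D, RPair side disj (A, B)} ∧
      C₀ ∩ C₁ = ∅ ∧
      V₀ ∈ C₀ ∧ W₀ ∈ C₀ ∧ V₁ ∈ C₁ ∧ W₁ ∈ C₁ ∧
      ∀ V W : D, RPair side disj (V, W) →
        ¬(V ∈ C₀ ∧ W ∈ C₁) ∧ ¬(V ∈ C₁ ∧ W ∈ C₀) := by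
  classical
  set C₀ : Set D := {A | ∃ B, RPair side disj (A, B) ∧
    pairDist side disj (V₀, W₀) (A, B) ≠ ⊤} with hC₀
  set C₁ : Set D := {A | (∃ B, RPair side disj (A, B)) ∧ A ∉ C₀} with hC₁
  have hstep : ∀ V W : D, RPair side disj (V, W) → V ∈ C₀ → W ∈ C₀ := by
    intro V W hVW ⟨B, hVB, hfin⟩
    have hfinW : pairDist side disj (V₀, W₀) (V, W) ≠ ⊤ :=
      hclosure _ V W B h₀ hVW hVB hfin
    exact ⟨V, hVW.swap', by rwa [← pairDist_swap]⟩
  refine ⟨C₀, C₁, ?_, ?_, ?_, ?_, ?_, ?_, ?_⟩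
  · ext A
    constructor
    · rintro (⟨B, hB, -⟩ | ⟨hB, -⟩)
      exacts [⟨B, hB⟩, hB]
    · intro hA
      by_cases h : A ∈ C₀
      · exact Or.inl h
      · exact Or.inr ⟨hA, h⟩
  · ext A
    simp only [Set.mem_inter_iff, Set.mem_empty_iff_false, iff_false]
    rintro ⟨hA, -, hA'⟩
    exact hA' hA
  · exact ⟨W₀, h₀, pairDist_self_ne_top h₀⟩
  · exact hstep V₀ W₀ h₀ ⟨W₀, h₀, pairDist_self_ne_top h₀⟩
  · refine ⟨⟨W₁, h₁⟩, ?_⟩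
    rintro ⟨B, hB, hfin⟩
    exact hclosure _ V₁ W₁ B h₀ h₁ hB hfin hinf
  · refine ⟨⟨V₁, h₁.swap'⟩, ?_⟩
    rintro ⟨B, hB, hfin⟩
    have := hclosure _ W₁ V₁ B h₀ h₁.swap' hB hfin
    rw [← pairDist_swap] at this
    exact this hinf
  · intro V W hVW
    constructor
    · rintro ⟨hV, -, hW⟩
      exact hW (hstep V W hVW hV)
    · rintro ⟨⟨-, hV⟩, hW⟩
      exact hV (hstep W V hVW.swap' hW)
end
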